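/- arXiv:1711.05928 — 2 statements merged into one kernel-verified Lean document; each statement's English description precedes it below -/
import Mathlib

section
/- Let r ≥ 0 and 0 < c ≤ 1 be real numbers, and let U : ℝ → ℝ satisfy U(B) ≤ 0 for every real B ≤ 0 and U(B) = r + U(B − c) for every real B > 0. Then U(B) ≤ (r/c)·(B + 1) for every real B ≥ −1. -/
/-- Deterministic core of the optimal-payout lemma: if `U B ≤ 0` for `B ≤ 0` and
`U B = r + U (B - c)` for `B > 0`, then `U B ≤ (r/c) * (B + 1)` for all `B ≥ -1`. -/
theorem stmt0 (r c : ℝ) (hr : 0 ≤ r) (hc0 : 0 < c) (hc1 : c ≤ 1)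
    (U : ℝ → ℝ)
    (hU0 : ∀ B : ℝ, B ≤ 0 → U B ≤ 0)
    (hUrec : ∀ B : ℝ, 0 < B → U B = r + U (B - c)) :
    ∀ B : ℝ, -1 ≤ B → U B ≤ r / c * (B + 1) := by
  have key : ∀ n : ℕ, ∀ B : ℝ, -1 ≤ B → B ≤ n * c → U B ≤ r / c * (B + 1) := by
    intro n
    induction n with
    | zero =>
      intro B hB1 hBn
      simp at hBn
      have h1 : U B ≤ 0 := hU0 B hBn
      have h2 : 0 ≤ r / c * (B + 1) :=
        mul_nonneg (div_nonneg hr hc0.le) (by linarith)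
      linarith
    | succ n ih =>
      intro B hB1 hBn
      rcases le_or_gt B 0 with h | h
      · have h2 : 0 ≤ r / c * (B + 1) :=
          mul_nonneg (div_nonneg hr hc0.le) (by linarith)
        linarith [hU0 B h]
      · rw [hUrec B h]
        have hbc : -1 ≤ B - c := by linarith
        have hbc2 : B - c ≤ n * c := by push_cast at hBn ⊢; linarith
        have := ih (B - c) hbc hbc2
        have hrc : r / c * c = r := div_mul_cancel₀ r hc0.ne'
        nlinarith [div_nonneg hr hc0.le]
  intro B hB1
  obtain ⟨n, hn⟩ := Archimedean.arch B hc0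
  refine key n B hB1 ?_
  simpa [nsmul_eq_mul] using hn
end

section
/- Let c_min, ε, μ_r, μ_c, u_r, u_c be real numbers with 0 < c_min ≤ 1, 0 < ε < c_min, c_min ≤ μ_c ≤ 1, c_min ≤ u_c, 0 ≤ μ_r ≤ 1, and suppose μ_r − u_r < ε and u_c − μ_c < ε. Then μ_r/μ_c − u_r/u_c < ε·(1 + 1/c_min)/(c_min − ε). -/
/-- Key algebraic claim bounding the difference of bang-per-buck ratios. -/
theorem stmt4 (c_min ε μr μc ur uc : ℝ)
    (hc0 : 0 < c_min) (hc1 : c_min ≤ 1)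
    (hε0 : 0 < ε) (hε1 : ε < c_min)
    (hμc0 : c_min ≤ μc) (hμc1 : μc ≤ 1)
    (huc : c_min ≤ uc)
    (hμr0 : 0 ≤ μr) (hμr1 : μr ≤ 1)
    (h1 : μr - ur < ε) (h2 : uc - μc < ε) :
    μr / μc - ur / uc < ε * (1 + 1 / c_min) / (c_min - ε) := by
  have hμc : (0:ℝ) < μc := lt_of_lt_of_le hc0 hμc0
  have huc0 : (0:ℝ) < uc := lt_of_lt_of_le hc0 huc
  have hce : (0:ℝ) < c_min - ε := by linarith
  rw [div_sub_div _ _ hμc.ne' huc0.ne', div_lt_div_iff₀ (mul_pos hμc huc0) hce]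
  have e1 : ε * (1 + 1 / c_min) = ε * (c_min + 1) / c_min := by field_simp
  rw [e1, div_mul_eq_mul_div, lt_div_iff₀ hc0]
  have hA : μr * uc - μc * ur < ε * (μr + μc) := by
    nlinarith [mul_le_mul_of_nonneg_left (le_of_lt h2) hμr0,
      mul_lt_mul_of_pos_left h1 hμc]
  have hB : ε * (μr + μc) * ((c_min - ε) * c_min) ≤ ε * (c_min + 1) * (μc * uc) := by
    have hb1 : (μr + μc) * c_min ≤ (c_min + 1) * μc := by nlinarith
    have hb2 : c_min - ε ≤ uc := by linarith
    nlinarith [mul_le_mul hb1 hb2 hce.le (by nlinarith : (0:ℝ) ≤ (c_min+1)*μc)]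
  nlinarith [mul_lt_mul_of_pos_right hA (mul_pos hce hc0)]
end
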